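/- arXiv:2507.18244 — 2 statements merged into one kernel-verified Lean document; each statement's English description precedes it below -/
import Mathlib

section
/- Let T > 0 and let y, z : [0, T') → ℝ be continuous, with z continuously differentiable, where 0 < T' ≤ T. Suppose y(0) < z(0), z(t) > 1 for all t, z satisfies z'(t) = F̃(z, t), and y satisfies the differential inequality y'(t) ≤ F̃(y, t) at every t with y(t) > 1, where F̃ is a functional that is monotone non-decreasing in the sense that if y(τ) ≤ z(τ) for all 0 ≤ τ ≤ t then F̃(y, t) ≤ F̃(z, t). Then y(t) < z(t) for all t ∈ [0, T'). -/
open Set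

theorem stmt4 (T T' : ℝ) (hT' : 0 < T') (hTT : T' ≤ T)
    (F : (ℝ → ℝ) → ℝ → ℝ) (y z : ℝ → ℝ)
    (hy : ContinuousOn y (Ico 0 T')) (hzc : ContinuousOn z (Ico 0 T'))
    (hFzc : ContinuousOn (fun t => F z t) (Ico 0 T'))
    (h0 : y 0 < z 0)
    (hz1 : ∀ t ∈ Ico (0:ℝ) T', 1 < z t)
    (hz : ∀ t ∈ Ico (0:ℝ) T', HasDerivAt z (F z t) t)
    (hyd : ∀ t ∈ Ico (0:ℝ) T', 1 < y t → ∃ d ≤ F y t, HasDerivAt y d t)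
    (hmono : ∀ f g : ℝ → ℝ, ∀ t : ℝ, (∀ τ, 0 ≤ τ → τ ≤ t → f τ ≤ g τ) → F f t ≤ F g t) :
    ∀ t ∈ Ico (0:ℝ) T', y t < z t := by
  by_contra hcon
  push_neg at hcon
  obtain ⟨s, hs, hzys⟩ := hcon
  obtain ⟨hs0, hsT⟩ := hs
  -- the set of crossing times up to s
  set S : Set ℝ := {t | t ∈ Icc (0:ℝ) s ∧ z t - y t ≤ 0} with hS
  have hIccsub : Icc (0:ℝ) s ⊆ Ico 0 T' := fun t ht => ⟨ht.1, lt_of_le_of_lt ht.2 hsT⟩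
  have hScl : IsClosed S := by
    have hc : ContinuousOn (fun t => z t - y t) (Icc 0 s) :=
      (hzc.sub hy).mono hIccsub
    have h := hc.preimage_isClosed_of_isClosed isClosed_Icc (isClosed_Iic (a := (0:ℝ)))
    have heq : S = Icc 0 s ∩ (fun t => z t - y t) ⁻¹' Iic 0 := by
      ext t; simp [hS, Set.mem_setOf_eq]
    rw [heq]; exact h
  have hSne : S.Nonempty := ⟨s, ⟨⟨hs0, le_refl s⟩, by linarith⟩⟩
  have hSbdd : BddBelow S := ⟨0, fun t ht => ht.1.1⟩
  set t₀ := sInf S with ht₀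
  have ht₀S : t₀ ∈ S := hScl.csInf_mem hSne hSbdd
  have ht₀0 : 0 ≤ t₀ := ht₀S.1.1
  have ht₀s : t₀ ≤ s := ht₀S.1.2
  have ht₀T : t₀ < T' := lt_of_le_of_lt ht₀s hsT
  have hzyt₀ : z t₀ ≤ y t₀ := by linarith [ht₀S.2]
  have ht₀pos : 0 < t₀ := by
    rcases lt_or_eq_of_le ht₀0 with h | h
    · exact h
    · exfalso; rw [← h] at hzyt₀; linarith
  -- before t₀, y < z
  have hbefore : ∀ t, 0 ≤ t → t < t₀ → y t < z t := by
    intro t ht0 htt₀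
    by_contra h
    push_neg at h
    have : t ∈ S := ⟨⟨ht0, le_trans htt₀.le ht₀s⟩, by linarith⟩
    exact absurd (csInf_le hSbdd this) (not_le.mpr htt₀)
  have hy1t₀ : 1 < y t₀ := lt_of_lt_of_le (hz1 t₀ ⟨ht₀0, ht₀T⟩) hzyt₀
  -- find t₁ < t₀ with y > 1 on a left neighborhood
  have hnhds : Ico (0:ℝ) T' ∈ nhds t₀ := by
    refine mem_nhds_iff.mpr ⟨Ioo 0 T', Ioo_subset_Ico_self, isOpen_Ioo, ⟨ht₀pos, ht₀T⟩⟩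
  have hcwa : ContinuousAt y t₀ :=
    (hy t₀ ⟨ht₀0, ht₀T⟩).continuousAt hnhds
  have hev : ∀ᶠ x in nhds t₀, 1 < y x := continuousAt_const.eventually_lt hcwa hy1t₀
  rw [Metric.eventually_nhds_iff] at hev
  obtain ⟨ε, hε, hball⟩ := hev
  set t₁ := t₀ - min (ε / 2) (t₀ / 2) with ht₁
  have hminpos : 0 < min (ε / 2) (t₀ / 2) := lt_min (by linarith) (by linarith)
  have ht₁0 : 0 < t₁ := by
    have : min (ε / 2) (t₀ / 2) ≤ t₀ / 2 := min_le_right _ _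
    simp only [ht₁]; linarith
  have ht₁t₀ : t₁ < t₀ := by simp only [ht₁]; linarith
  have hIccsub' : Icc t₁ t₀ ⊆ Ico 0 T' := fun t ht => ⟨le_trans ht₁0.le ht.1, lt_of_le_of_lt ht.2 ht₀T⟩
  have hy1 : ∀ t ∈ Icc t₁ t₀, 1 < y t := by
    intro t ht
    apply hball
    rw [Real.dist_eq, abs_sub_lt_iff]
    have h2 : min (ε / 2) (t₀ / 2) ≤ ε / 2 := min_le_left _ _
    constructor
    · linarith [ht.2]
    · have := ht.1; simp only [ht₁] at this; linarith
  -- w = z - y is monotone on [t₁, t₀]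
  set w : ℝ → ℝ := fun t => z t - y t with hw
  have hkey : ∀ t ∈ Ioo t₁ t₀, ∃ d, HasDerivAt w d t ∧ 0 ≤ d := by
    intro t ht
    have htmem : t ∈ Ico (0:ℝ) T' := hIccsub' ⟨ht.1.le, ht.2.le⟩
    obtain ⟨d, hd, hyd'⟩ := hyd t htmem (hy1 t ⟨ht.1.le, ht.2.le⟩)
    refine ⟨F z t - d, (hz t htmem).sub hyd', ?_⟩
    have hFle : F y t ≤ F z t := by
      apply hmono
      intro τ hτ0 hτt
      exact le_of_lt (hbefore τ hτ0 (lt_of_le_of_lt hτt ht.2))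
    linarith
  have hmonow : MonotoneOn w (Icc t₁ t₀) := by
    apply monotoneOn_of_deriv_nonneg (convex_Icc t₁ t₀)
    · exact (hzc.sub hy).mono hIccsub'
    · rw [interior_Icc]
      intro t ht
      obtain ⟨d, hd, _⟩ := hkey t ht
      exact hd.differentiableAt.differentiableWithinAt
    · rw [interior_Icc]
      intro t ht
      obtain ⟨d, hd, hd0⟩ := hkey t ht
      rw [hd.deriv]
      exact hd0
  have h1 : w t₁ ≤ w t₀ :=
    hmonow ⟨le_refl t₁, ht₁t₀.le⟩ ⟨ht₁t₀.le, le_refl t₀⟩ ht₁t₀.le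
  have h2 : 0 < w t₁ := by
    have := hbefore t₁ ht₁0.le ht₁t₀
    simp only [hw]; linarith
  have h3 : w t₀ ≤ 0 := by simp only [hw]; linarith
  linarith
end

section
/- Let T > 0 and C, ε, b > 0. Suppose w ∈ C([0,T]) solves w(t) = w₀ + ε∫₀ᵗ F(τ,w) dτ with F(t,w) = C·(w(t)·∫₀ᵗ exp(b∫₀ˢ exp(w(τ)e^{Cτ}) dτ) ds + e^{-Ct}·exp(b∫₀ᵗ exp(w(τ)e^{Cτ}) dτ)), w₀ > 1, and ‖w‖_∞ ≤ M. Then the function z(t) = exp(e^{Ct}·w(t) − 1) is a C¹ solution of z' = C·z·[(1+log z) + ε(1+log z)·∫₀ᵗ exp(∫₀ˢ z dτ) ds + ε·exp(∫₀ᵗ z dτ)] with z(0) = e^{w₀ − 1}. -/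
open Set

/-- The history-dependent nonlinearity `F(t,w)` from the reduced Boussinesq fixed-point
formulation. -/
noncomputable def boussF (C b : ℝ) (w : ℝ → ℝ) (t : ℝ) : ℝ :=
  C * (w t * (∫ s in (0:ℝ)..t, Real.exp (b * ∫ τ in (0:ℝ)..s, Real.exp (w τ * Real.exp (C * τ)))) +
    Real.exp (-C * t) * Real.exp (b * ∫ τ in (0:ℝ)..t, Real.exp (w τ * Real.exp (C * τ))))

theorem stmt18 (T C ε b w₀ M : ℝ) (hT : 0 < T) (hC : 0 < C) (hε : 0 < ε)
    (hb : b = (Real.exp 1)⁻¹) (hw₀ : 1 < w₀)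
    (w : ℝ → ℝ) (hw : Continuous w) (hM : ∀ t ∈ Icc (0:ℝ) T, |w t| ≤ M)
    (heq : ∀ t ∈ Icc (0:ℝ) T, w t = w₀ + ε * ∫ τ in (0:ℝ)..t, boussF C b w τ) :
    (fun t => Real.exp (Real.exp (C * t) * w t - 1)) 0 = Real.exp (w₀ - 1) ∧
      ∀ t ∈ Icc (0:ℝ) T,
        HasDerivWithinAt (fun t => Real.exp (Real.exp (C * t) * w t - 1))
          (C * Real.exp (Real.exp (C * t) * w t - 1) *
            ((1 + Real.log (Real.exp (Real.exp (C * t) * w t - 1))) +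
              ε * (1 + Real.log (Real.exp (Real.exp (C * t) * w t - 1))) *
                (∫ s in (0:ℝ)..t,
                  Real.exp (∫ τ in (0:ℝ)..s, Real.exp (Real.exp (C * τ) * w τ - 1))) +
              ε * Real.exp (∫ τ in (0:ℝ)..t, Real.exp (Real.exp (C * τ) * w τ - 1))))
          (Icc 0 T) t := by
  have h0 : (0:ℝ) ∈ Icc (0:ℝ) T := ⟨le_refl _, hT.le⟩
  constructor
  · simp [heq 0 h0]
  intro t ht
  -- continuity of the nonlinearity
  set g : ℝ → ℝ := fun τ => Real.exp (w τ * Real.exp (C * τ)) with hgdef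
  have hgc : Continuous g := (hw.mul (Real.continuous_exp.comp (continuous_const.mul continuous_id))).rexp
  have hinner : Continuous fun s => ∫ τ in (0:ℝ)..s, g τ :=
    intervalIntegral.continuous_primitive (fun a b => hgc.intervalIntegrable a b) 0
  have houterInt : Continuous fun s => Real.exp (b * ∫ τ in (0:ℝ)..s, g τ) :=
    (continuous_const.mul hinner).rexp
  have hFcont : Continuous (boussF C b w) := by
    unfold boussF
    exact continuous_const.mul
      ((hw.mul (intervalIntegral.continuous_primitive
        (fun a b => houterInt.intervalIntegrable a b) 0)).add
        (((Real.continuous_exp.comp (continuous_const.mul continuous_id)).mul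
          (continuous_const.mul hinner).rexp)))
  -- derivative of w within Icc
  have hwderiv : HasDerivWithinAt w (ε * boussF C b w t) (Icc 0 T) t := by
    have hG : HasDerivAt (fun u => w₀ + ε * ∫ τ in (0:ℝ)..u, boussF C b w τ)
        (ε * boussF C b w t) t := by
      have hint : HasDerivAt (fun u => ∫ τ in (0:ℝ)..u, boussF C b w τ) (boussF C b w t) t :=
        intervalIntegral.integral_hasDerivAt_right (hFcont.intervalIntegrable 0 t)
          (hFcont.stronglyMeasurableAtFilter _ _) hFcont.continuousAt
      exact (hint.const_mul ε).const_add w₀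
    exact hG.hasDerivWithinAt.congr (fun y hy => heq y hy) (heq t ht)
  -- derivative of the exponent
  have hexp : HasDerivAt (fun u : ℝ => Real.exp (C * u)) (C * Real.exp (C * t)) t := by
    simpa [mul_comm, Function.comp_def] using (Real.hasDerivAt_exp (C * t)).comp t
      ((hasDerivAt_id t).const_mul C)
  have hx : HasDerivWithinAt (fun u => Real.exp (C * u) * w u - 1)
      (C * Real.exp (C * t) * w t + Real.exp (C * t) * (ε * boussF C b w t)) (Icc 0 T) t := by
    simpa using (hexp.hasDerivWithinAt.mul hwderiv).sub_const 1
  have hz := hx.exp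
  -- rewrite the target derivative
  have key : ∀ s : ℝ, (∫ τ in (0:ℝ)..s, Real.exp (Real.exp (C * τ) * w τ - 1))
      = b * ∫ τ in (0:ℝ)..s, g τ := by
    intro s
    rw [← intervalIntegral.integral_const_mul]
    apply intervalIntegral.integral_congr
    intro τ _
    show Real.exp (Real.exp (C * τ) * w τ - 1) = b * g τ
    rw [Real.exp_sub, div_eq_inv_mul, mul_comm (Real.exp (C * τ)) (w τ), hb]
  have keyout : (∫ s in (0:ℝ)..t, Real.exp (∫ τ in (0:ℝ)..s, Real.exp (Real.exp (C * τ) * w τ - 1)))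
      = ∫ s in (0:ℝ)..t, Real.exp (b * ∫ τ in (0:ℝ)..s, g τ) := by
    apply intervalIntegral.integral_congr
    intro s _
    show Real.exp (∫ τ in (0:ℝ)..s, Real.exp (Real.exp (C * τ) * w τ - 1))
      = Real.exp (b * ∫ τ in (0:ℝ)..s, g τ)
    rw [key s]
  convert hz using 1
  rw [keyout, key t, Real.log_exp]
  unfold boussF
  have hne : Real.exp (C * t) ≠ 0 := (Real.exp_pos _).ne'
  have hneg : Real.exp (-C * t) = (Real.exp (C * t))⁻¹ := by
    rw [← Real.exp_neg]; ring_nf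
  rw [hneg]
  field_simp
  ring
end
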